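/- arXiv:2104.14986 — 2 statements merged into one kernel-verified Lean document; each statement's English description precedes it below -/
import Mathlib

section
/- Let (d^{(1)}_m) and (d^{(2)}_m) be sequences of positive reals tending to infinity, and for each m let G_m be a bipartite multigraph with nonempty parts V_1(G_m), V_2(G_m) such that max_{v∈V_1(G_m)} |deg(v)/d^{(1)}_m − 1| → 0 and max_{w∈V_2(G_m)} |deg(w)/d^{(2)}_m − 1| → 0 as m → ∞ (i.e. G_m is almost (d^{(1)}_m, d^{(2)}_m)-regular). Let G'_m be bipartite multigraphs on the same vertex set with the same parts, such that (max_{v∈V_1(G'_m)} deg_{G'_m}(v))/d^{(1)}_m → 0 and (max_{w∈V_2(G'_m)} deg_{G'_m}(w))/d^{(2)}_m → 0. Then: (i) the union G_m ∪ G'_m is almost (d^{(1)}_m, d^{(2)}_m)-regular, i.e. max_{v∈V_1} |deg_{G_m∪G'_m}(v)/d^{(1)}_m − 1| → 0 and max_{w∈V_2} |deg_{G_m∪G'_m}(w)/d^{(2)}_m − 1| → 0; and (ii) λ_1(G_m) − λ_1(G_m ∪ G'_m) → 0 as m → ∞. -/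
open Matrix Filter

/-- Ascending list of eigenvalues (with multiplicity) of a real matrix;
junk value `[]` if the matrix is not symmetric. -/
noncomputable def eigs {V : Type*} [Fintype V] [DecidableEq V] (A : Matrix V V ℝ) : List ℝ :=
  if hA : A.IsHermitian then (Finset.univ.val.map hA.eigenvalues).sort (· ≤ ·) else []

/-- `i`-th smallest eigenvalue (0-indexed): `λ_i`. -/
noncomputable def eigAsc {V : Type*} [Fintype V] [DecidableEq V] (A : Matrix V V ℝ) (i : ℕ) : ℝ :=
  (eigs A).getD i 0

/-- `i`-th largest eigenvalue (1-indexed): `μ_i`. -/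
noncomputable def eigDesc {V : Type*} [Fintype V] [DecidableEq V] (A : Matrix V V ℝ) (i : ℕ) : ℝ :=
  (eigs A).reverse.getD (i - 1) 0

/-- Degree of vertex `v` in the multigraph with adjacency matrix `A`. -/
def deg {V : Type*} [Fintype V] (A : Matrix V V ℕ) (v : V) : ℕ := ∑ u, A v u

/-- `D⁻¹ᐟ² A D⁻¹ᐟ²`, normalized adjacency matrix of a multigraph. -/
noncomputable def normAdj {V : Type*} [Fintype V] [DecidableEq V] (A : Matrix V V ℕ) :
    Matrix V V ℝ :=
  Matrix.diagonal (fun v => ((deg A v : ℝ)) ^ (-(1/2) : ℝ)) * A.map (Nat.cast : ℕ → ℝ) *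
    Matrix.diagonal (fun v => ((deg A v : ℝ)) ^ (-(1/2) : ℝ))

/-- Normalized Laplacian `I - D⁻¹ᐟ² A D⁻¹ᐟ²` of a multigraph. -/
noncomputable def normLap {V : Type*} [Fintype V] [DecidableEq V] (A : Matrix V V ℕ) :
    Matrix V V ℝ :=
  1 - normAdj A

/-- `λ₁`: second-smallest eigenvalue of the normalized Laplacian. -/
noncomputable def lam1 {V : Type*} [Fintype V] [DecidableEq V] (A : Matrix V V ℕ) : ℝ :=
  eigAsc (normLap A) 1

/-- Adjacency matrix of the bipartite multigraph with biadjacency matrix `B`. -/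
def bipAdj {V₁ V₂ : Type*} (B : Matrix V₁ V₂ ℕ) : Matrix (V₁ ⊕ V₂) (V₁ ⊕ V₂) ℕ :=
  Matrix.fromBlocks 0 B Bᵀ 0

/-!
Adding `G'` changes every degree by a factor `1 + o(1)`, so the normalized adjacency matrices of
`G` and `G ∪ G'` differ by a symmetric matrix whose row sums, weighted by `√deg`, are `o(√deg)`.
The Schur test turns this into a bound `o(1)` on the quadratic form of the difference, and
Weyl's inequality (via Courant–Fischer) transfers it to every eigenvalue of the normalized
Laplacian.
-/

open Module Submodule
open scoped RealInnerProductSpace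

lemma OrthonormalBasis.repr_eq_zero_of_mem_span_image {𝕜 ι E : Type*} [RCLike 𝕜] [Fintype ι]
    [NormedAddCommGroup E] [InnerProductSpace 𝕜 E] (b : OrthonormalBasis ι 𝕜 E) {s : Set ι}
    {x : E} (hx : x ∈ span 𝕜 (b '' s)) {j : ι} (hj : j ∉ s) : b.repr x j = 0 := by
  rw [b.repr_apply_apply, ← mem_orthogonal_singleton_iff_inner_right]
  refine span_le.2 ?_ hx
  rintro _ ⟨i, hi, rfl⟩
  exact mem_orthogonal_singleton_iff_inner_right.2
    (b.orthonormal.2 fun hji => hj (hji ▸ hi))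

lemma OrthonormalBasis.finrank_span_image {𝕜 ι E : Type*} [RCLike 𝕜] [Fintype ι]
    [NormedAddCommGroup E] [InnerProductSpace 𝕜 E] (b : OrthonormalBasis ι 𝕜 E) (s : Finset ι) :
    finrank 𝕜 (span 𝕜 (b '' s)) = s.card := by
  rw [Set.image_eq_range]
  exact (finrank_span_eq_card
    (b.orthonormal.linearIndependent.comp _ Subtype.val_injective)).trans (Fintype.card_coe s)

lemma Submodule.exists_mem_inf_ne_zero_of_finrank_lt {K V : Type*} [DivisionRing K]
    [AddCommGroup V] [Module K V] [FiniteDimensional K V] {s t : Submodule K V}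
    (h : finrank K V < finrank K s + finrank K t) : ∃ x ∈ s ⊓ t, x ≠ 0 :=
  exists_mem_ne_zero_of_ne_bot fun hbot =>
    h.not_ge (finrank_add_finrank_le_of_disjoint (disjoint_iff.2 hbot))

namespace LinearMap.IsSymmetric

variable {E : Type*} [NormedAddCommGroup E] [InnerProductSpace ℝ E] [FiniteDimensional ℝ E]
  {n : ℕ} (hn : finrank ℝ E = n) {T : E →ₗ[ℝ] E} (hT : T.IsSymmetric)

include hT in
lemma inner_apply_self_eq_sum (x : E) :
    ⟪T x, x⟫ = ∑ i, hT.eigenvalues hn i * (hT.eigenvectorBasis hn).repr x i ^ 2 := by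
  rw [← (hT.eigenvectorBasis hn).repr.inner_map_map, PiLp.inner_apply]
  simp only [hT.eigenvectorBasis_apply_self_apply, RCLike.inner_apply, conj_trivial,
    RCLike.ofReal_real_eq_id, _root_.id]
  exact Finset.sum_congr rfl fun i _ => by ring

include hT in
lemma eigenvalues_mul_norm_sq_le_of_mem_span {k : Fin n} {x : E}
    (hx : x ∈ span ℝ (hT.eigenvectorBasis hn '' Finset.Iic k)) :
    hT.eigenvalues hn k * ‖x‖ ^ 2 ≤ ⟪T x, x⟫ := by
  rw [inner_apply_self_eq_sum hn hT, ← (hT.eigenvectorBasis hn).repr.norm_map,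
    EuclideanSpace.real_norm_sq_eq, Finset.mul_sum]
  refine Finset.sum_le_sum fun j _ => ?_
  by_cases hj : j ≤ k
  · exact mul_le_mul_of_nonneg_right (hT.eigenvalues_antitone hn hj) (sq_nonneg _)
  · rw [(hT.eigenvectorBasis hn).repr_eq_zero_of_mem_span_image hx (by simpa using hj)]
    simp

include hT in
lemma inner_apply_self_le_of_mem_span {k : Fin n} {x : E}
    (hx : x ∈ span ℝ (hT.eigenvectorBasis hn '' Finset.Ici k)) :
    ⟪T x, x⟫ ≤ hT.eigenvalues hn k * ‖x‖ ^ 2 := by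
  rw [inner_apply_self_eq_sum hn hT, ← (hT.eigenvectorBasis hn).repr.norm_map,
    EuclideanSpace.real_norm_sq_eq, Finset.mul_sum]
  refine Finset.sum_le_sum fun j _ => ?_
  by_cases hj : k ≤ j
  · exact mul_le_mul_of_nonneg_right (hT.eigenvalues_antitone hn hj) (sq_nonneg _)
  · rw [(hT.eigenvectorBasis hn).repr_eq_zero_of_mem_span_image hx (by simpa using hj)]
    simp

/-- Weyl's inequality. The eigenvalues are indexed in decreasing order; the proof finds a nonzero
vector in the span of the first `k + 1` eigenvectors of `T` and the last `n - k` of `S`. -/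
theorem eigenvalues_le_eigenvalues_add {S : E →ₗ[ℝ] E} (hS : S.IsSymmetric) {ε : ℝ}
    (h : ∀ x, ⟪T x, x⟫ ≤ ⟪S x, x⟫ + ε * ‖x‖ ^ 2) (k : Fin n) :
    hT.eigenvalues hn k ≤ hS.eigenvalues hn k + ε := by
  obtain ⟨x, hx, hx0⟩ := exists_mem_inf_ne_zero_of_finrank_lt
    (s := span ℝ (hT.eigenvectorBasis hn '' Finset.Iic k))
    (t := span ℝ (hS.eigenvectorBasis hn '' Finset.Ici k)) (by
      rw [OrthonormalBasis.finrank_span_image, OrthonormalBasis.finrank_span_image, Fin.card_Iic,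
        Fin.card_Ici]
      omega)
  have hxT := eigenvalues_mul_norm_sq_le_of_mem_span hn hT (mem_inf.1 hx).1
  have hxS := inner_apply_self_le_of_mem_span hn hS (mem_inf.1 hx).2
  have hpos : 0 < ‖x‖ ^ 2 := by positivity
  nlinarith [h x]

end LinearMap.IsSymmetric

section eigAsc

variable {V : Type*} [Fintype V] [DecidableEq V]

lemma eigs_eq_ofFn {A : Matrix V V ℝ} (hA : A.IsHermitian) :
    eigs A = List.ofFn (hA.eigenvalues₀ ∘ Fin.rev) := by
  rw [eigs, dif_pos hA]
  refine List.Perm.eq_of_sortedLE (List.Pairwise.sortedLE (Multiset.pairwise_sort ..))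
    (List.sortedLE_ofFn_iff.2 (hA.eigenvalues₀_antitone.comp Fin.rev_anti)) ?_
  rw [← Multiset.coe_eq_coe, Multiset.sort_eq, ← Fin.univ_val_map, ← Multiset.map_map,
    (Multiset.bijective_iff_map_univ_eq_univ _).1 Fin.rev_bijective,
    show hA.eigenvalues = hA.eigenvalues₀ ∘ (Fintype.equivOfCardEq (Fintype.card_fin _)).symm
      from rfl, ← Multiset.map_map, Multiset.map_univ_val_equiv]

lemma eigAsc_eq_eigenvalues₀ {A : Matrix V V ℝ} (hA : A.IsHermitian) {i : ℕ}
    (hi : i < Fintype.card V) : eigAsc A i = hA.eigenvalues₀ (Fin.rev ⟨i, hi⟩) := by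
  simp [eigAsc, eigs_eq_ofFn hA, hi]

lemma eigAsc_of_card_le (A : Matrix V V ℝ) {i : ℕ} (hi : Fintype.card V ≤ i) : eigAsc A i = 0 := by
  by_cases hA : A.IsHermitian
  · simp [eigAsc, eigs_eq_ofFn hA, hi]
  · rw [eigAsc, eigs, dif_neg hA, List.getD_nil]

lemma inner_toEuclideanLin_self (A : Matrix V V ℝ) (x : EuclideanSpace ℝ V) :
    ⟪Matrix.toEuclideanLin A x, x⟫ = x.ofLp ⬝ᵥ A *ᵥ x.ofLp :=
  rfl

theorem eigAsc_le_eigAsc_add {A B : Matrix V V ℝ} (hA : A.IsHermitian) (hB : B.IsHermitian)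
    {ε : ℝ} (hε : 0 ≤ ε) (h : ∀ x : V → ℝ, x ⬝ᵥ A *ᵥ x ≤ x ⬝ᵥ B *ᵥ x + ε * (x ⬝ᵥ x)) (i : ℕ) :
    eigAsc A i ≤ eigAsc B i + ε := by
  by_cases hi : i < Fintype.card V
  · rw [eigAsc_eq_eigenvalues₀ hA hi, eigAsc_eq_eigenvalues₀ hB hi]
    refine LinearMap.IsSymmetric.eigenvalues_le_eigenvalues_add _ _ _ (fun x => ?_) _
    rw [inner_toEuclideanLin_self, inner_toEuclideanLin_self, ← real_inner_self_eq_norm_sq]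
    exact h x.ofLp
  · rw [eigAsc_of_card_le A (not_lt.1 hi), eigAsc_of_card_le B (not_lt.1 hi)]
    linarith

theorem abs_eigAsc_sub_le {A B : Matrix V V ℝ} (hA : A.IsHermitian) (hB : B.IsHermitian)
    {ε : ℝ} (hε : 0 ≤ ε) (h : ∀ x : V → ℝ, |x ⬝ᵥ (A - B) *ᵥ x| ≤ ε * (x ⬝ᵥ x)) (i : ℕ) :
    |eigAsc A i - eigAsc B i| ≤ ε := by
  have hform (x : V → ℝ) : x ⬝ᵥ (A - B) *ᵥ x = x ⬝ᵥ A *ᵥ x - x ⬝ᵥ B *ᵥ x := by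
    rw [sub_mulVec, dotProduct_sub]
  refine abs_sub_le_iff.2 ⟨?_, ?_⟩
  · linarith [eigAsc_le_eigAsc_add hA hB hε
      (fun x => by linarith [(abs_le.1 (h x)).2, hform x]) i]
  · linarith [eigAsc_le_eigAsc_add hB hA hε
      (fun x => by linarith [(abs_le.1 (h x)).1, hform x]) i]

end eigAsc

lemma two_mul_le_div_mul_sq_add_div_mul_sq {p q : ℝ} (hp : 0 < p) (hq : 0 < q) (a b : ℝ) :
    2 * (a * b) ≤ q / p * a ^ 2 + p / q * b ^ 2 := by
  have key : q / p * a ^ 2 + p / q * b ^ 2 - 2 * (a * b) = (q * a - p * b) ^ 2 / (p * q) := by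
    field_simp
    ring
  have : 0 ≤ (q * a - p * b) ^ 2 / (p * q) := by positivity
  linarith

/-- The Schur test for a symmetric matrix. -/
theorem Matrix.IsSymm.abs_dotProduct_mulVec_le {V : Type*} [Fintype V] {M : Matrix V V ℝ}
    (hM : M.IsSymm) {w : V → ℝ} (hw : ∀ v, 0 < w v) {ε : ℝ}
    (hrow : ∀ u, ∑ v, |M u v| * w v ≤ ε * w u) (x : V → ℝ) :
    |x ⬝ᵥ M *ᵥ x| ≤ ε * (x ⬝ᵥ x) := by
  set S := ∑ u, ∑ v, |M u v| * (w v / w u * x u ^ 2)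
  have hsymm (u v : V) : M v u = M u v := by rw [← hM.apply u v]
  have h_abs : |x ⬝ᵥ M *ᵥ x| ≤ ∑ u, ∑ v, |M u v| * (|x u| * |x v|) := by
    simp only [dotProduct, mulVec, Finset.mul_sum]
    refine (Finset.abs_sum_le_sum_abs _ _).trans (Finset.sum_le_sum fun u _ => ?_)
    refine (Finset.abs_sum_le_sum_abs _ _).trans (Finset.sum_le_sum fun v _ => ?_)
    rw [abs_mul, abs_mul]
    exact le_of_eq (by ring)
  have h_amgm : 2 * ∑ u, ∑ v, |M u v| * (|x u| * |x v|)
      ≤ S + ∑ u, ∑ v, |M v u| * (w u / w v * x v ^ 2) := by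
    rw [← Finset.sum_add_distrib, Finset.mul_sum]
    refine Finset.sum_le_sum fun u _ => ?_
    rw [← Finset.sum_add_distrib, Finset.mul_sum]
    refine Finset.sum_le_sum fun v _ => ?_
    have := two_mul_le_div_mul_sq_add_div_mul_sq (hw u) (hw v) |x u| |x v|
    rw [sq_abs, sq_abs] at this
    rw [hsymm u v]
    nlinarith [abs_nonneg (M u v)]
  have h_swap : ∑ u, ∑ v, |M v u| * (w u / w v * x v ^ 2) = S := Finset.sum_comm
  have h_row : S ≤ ε * (x ⬝ᵥ x) := by
    rw [dotProduct, Finset.mul_sum]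
    refine Finset.sum_le_sum fun u _ => ?_
    have : ∑ v, |M u v| * (w v / w u * x u ^ 2) = x u ^ 2 / w u * ∑ v, |M u v| * w v := by
      rw [Finset.mul_sum]
      exact Finset.sum_congr rfl fun v _ => by ring
    rw [this]
    calc x u ^ 2 / w u * ∑ v, |M u v| * w v ≤ x u ^ 2 / w u * (ε * w u) :=
          mul_le_mul_of_nonneg_left (hrow u) (div_nonneg (sq_nonneg _) (hw u).le)
      _ = ε * (x u * x u) := by field_simp [(hw u).ne']
  linarith

lemma abs_div_sub_add_div_le {a a' s s' η : ℝ} (ha : 0 ≤ a) (ha' : 0 ≤ a') (hs : 0 < s)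
    (hss' : s ≤ s') (hs' : s' ≤ (1 + η) * s) :
    |a / s - (a + a') / s'| ≤ (η * a + a') / s := by
  have hs'0 : 0 < s' := hs.trans_le hss'
  rw [div_sub_div _ _ hs.ne' hs'0.ne', abs_div, abs_of_pos (mul_pos hs hs'0),
    div_le_div_iff₀ (mul_pos hs hs'0) hs]
  have hη : 0 ≤ η := by nlinarith
  have key : |a * s' - s * (a + a')| ≤ η * a * s + a' * s' := by
    rw [abs_le]
    constructor <;> nlinarith [mul_nonneg ha (sub_nonneg.2 hss'), mul_nonneg ha' hs.le,
      mul_le_mul_of_nonneg_left hs' ha, mul_le_mul_of_nonneg_left hss' ha']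
  nlinarith [mul_le_mul_of_nonneg_right key hs.le, mul_nonneg (mul_nonneg hη ha) hs.le]

section normLap

variable {V : Type*} [Fintype V]

lemma deg_add (A A' : Matrix V V ℕ) (u : V) : deg (A + A') u = deg A u + deg A' u :=
  Finset.sum_add_distrib

lemma cast_deg (A : Matrix V V ℕ) (u : V) : (deg A u : ℝ) = ∑ v, (A u v : ℝ) := by
  rw [deg, Nat.cast_sum]

variable [DecidableEq V]

lemma normAdj_apply (A : Matrix V V ℕ) (u v : V) :
    normAdj A u v = A u v / √(deg A u * deg A v) := by
  rw [Real.sqrt_eq_rpow, div_eq_mul_inv, ← Real.rpow_neg (by positivity),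
    Real.mul_rpow (by positivity) (by positivity)]
  simp only [normAdj, diagonal, one_div, mul_apply, of_apply, map_apply, ite_mul, zero_mul,
    Finset.sum_ite_eq, Finset.mem_univ, ↓reduceIte, mul_ite, mul_zero, Finset.sum_ite_eq']
  ring

lemma isSymm_normAdj {A : Matrix V V ℕ} (hA : A.IsSymm) : (normAdj A).IsSymm := by
  refine IsSymm.ext fun u v => ?_
  rw [normAdj_apply, normAdj_apply, hA.apply u v, mul_comm]

lemma isHermitian_normLap {A : Matrix V V ℕ} (hA : A.IsSymm) : (normLap A).IsHermitian :=
  isHermitian_iff_isSymm.2 (isSymm_one.sub (isSymm_normAdj hA))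

variable {A A' : Matrix V V ℕ} {η : ℝ} (hpos : ∀ u, 0 < deg A u)
  (hsmall : ∀ u, (deg A' u : ℝ) ≤ η * deg A u)
include hpos hsmall

lemma abs_normAdj_sub_normAdj_add_le (u v : V) :
    |normAdj A u v - normAdj (A + A') u v| ≤ (η * A u v + A' u v) / √(deg A u * deg A v) := by
  have hη : 0 ≤ η := by
    have h0 : (0 : ℝ) < deg A u := by exact_mod_cast hpos u
    nlinarith [hsmall u, (deg A' u).cast_nonneg (α := ℝ)]
  have hdeg (t : V) : (deg A t : ℝ) ≤ deg (A + A') t ∧ (deg (A + A') t : ℝ) ≤ (1 + η) * deg A t := by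
    rw [deg_add, Nat.cast_add]
    constructor <;> linarith [hsmall t, (deg A' t).cast_nonneg (α := ℝ)]
  have hprod : (deg (A + A') u * deg (A + A') v : ℝ) ≤ ((1 + η) * √(deg A u * deg A v)) ^ 2 := by
    rw [mul_pow, Real.sq_sqrt (by positivity)]
    calc (deg (A + A') u * deg (A + A') v : ℝ) ≤ ((1 + η) * deg A u) * ((1 + η) * deg A v) :=
          mul_le_mul (hdeg u).2 (hdeg v).2 (by positivity) (by positivity)
      _ = (1 + η) ^ 2 * (deg A u * deg A v) := by ring
  rw [normAdj_apply, normAdj_apply, Matrix.add_apply, Nat.cast_add]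
  refine abs_div_sub_add_div_le (by positivity) (by positivity)
    (Real.sqrt_pos.2 (by have := hpos u; have := hpos v; positivity))
    (Real.sqrt_le_sqrt (mul_le_mul (hdeg u).1 (hdeg v).1 (by positivity) (by positivity)))
    ((Real.sqrt_le_sqrt hprod).trans_eq (Real.sqrt_sq (by positivity)))

lemma sum_abs_normAdj_sub_normAdj_add_mul_sqrt_le (u : V) :
    ∑ v, |normAdj A u v - normAdj (A + A') u v| * √(deg A v) ≤ 2 * η * √(deg A u) := by
  have hu : (0 : ℝ) < deg A u := by exact_mod_cast hpos u
  calc ∑ v, |normAdj A u v - normAdj (A + A') u v| * √(deg A v)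
      ≤ ∑ v, (η * A u v + A' u v) / √(deg A u * deg A v) * √(deg A v) :=
        Finset.sum_le_sum fun v _ => mul_le_mul_of_nonneg_right
          (abs_normAdj_sub_normAdj_add_le hpos hsmall u v) (Real.sqrt_nonneg _)
    _ = ∑ v, (η * A u v + A' u v) / √(deg A u) := by
        refine Finset.sum_congr rfl fun v _ => ?_
        have hv : (0 : ℝ) < √(deg A v) := Real.sqrt_pos.2 (by exact_mod_cast hpos v)
        rw [Real.sqrt_mul hu.le]
        field_simp
    _ = (η * deg A u + deg A' u) / √(deg A u) := by
        rw [← Finset.sum_div, Finset.sum_add_distrib, ← Finset.mul_sum, ← cast_deg, ← cast_deg]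
    _ ≤ 2 * η * deg A u / √(deg A u) := by
        gcongr
        linarith [hsmall u]
    _ = 2 * η * √(deg A u) := by rw [mul_div_assoc, Real.div_sqrt]

theorem abs_eigAsc_normLap_sub_normLap_add_le (hA : A.IsSymm) (hA' : A'.IsSymm) (hη : 0 ≤ η)
    (i : ℕ) : |eigAsc (normLap A) i - eigAsc (normLap (A + A')) i| ≤ 2 * η := by
  refine abs_eigAsc_sub_le (isHermitian_normLap hA) (isHermitian_normLap (hA.add hA'))
    (by positivity) (fun x => ?_) i
  rw [normLap, normLap, sub_sub_sub_cancel_left]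
  refine ((isSymm_normAdj (hA.add hA')).sub (isSymm_normAdj hA)).abs_dotProduct_mulVec_le
    (w := fun v => √(deg A v)) (fun v => Real.sqrt_pos.2 (by exact_mod_cast hpos v))
    (fun u => ?_) x
  simpa only [Matrix.sub_apply, abs_sub_comm]
    using sum_abs_normAdj_sub_normAdj_add_mul_sqrt_le hpos hsmall u

end normLap

lemma pos_of_abs_div_sub_one_lt_one {a d : ℝ} (ha : 0 ≤ a) (h : |a / d - 1| < 1) :
    0 < a ∧ 0 < d := by
  have hq : 0 < a / d := by linarith [(abs_lt.1 h).1]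
  rcases div_pos_iff.1 hq with h' | h'
  · exact h'
  · linarith [h'.1]

lemma le_mul_of_abs_div_sub_one_lt {a b d η : ℝ} (ha : 0 ≤ a) (hb : 0 ≤ b)
    (hreg : |a / d - 1| < 1 / 2) (hsmall : b / d < η / 2) : b ≤ η * a := by
  obtain ⟨-, hd⟩ := pos_of_abs_div_sub_one_lt_one ha (hreg.trans (by norm_num))
  rw [abs_lt, lt_sub_iff_add_lt, lt_div_iff₀ hd] at hreg
  rw [div_lt_iff₀ hd] at hsmall
  nlinarith [hreg.1]

section Asymptotics

variable {ι : Type*} {V : ι → Type*} [∀ m, Fintype (V m)]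

/-- The target degree `d m u` may depend on the vertex: an almost `(d₁, d₂)`-regular bipartite
family takes `d₁` on one side and `d₂` on the other. -/
def IsAlmostRegular (l : Filter ι) (A : ∀ m, Matrix (V m) (V m) ℕ) (d : ∀ m, V m → ℝ) : Prop :=
  ∀ ε > (0 : ℝ), ∀ᶠ m in l, ∀ u, |(deg (A m) u : ℝ) / d m u - 1| < ε

def HasNegligibleDegrees (l : Filter ι) (A' : ∀ m, Matrix (V m) (V m) ℕ) (d : ∀ m, V m → ℝ) :
    Prop :=
  ∀ ε > (0 : ℝ), ∀ᶠ m in l, ∀ u, (deg (A' m) u : ℝ) / d m u < ε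

variable {l : Filter ι} {A A' : ∀ m, Matrix (V m) (V m) ℕ} {d : ∀ m, V m → ℝ}

theorem IsAlmostRegular.add (hA : IsAlmostRegular l A d) (hA' : HasNegligibleDegrees l A' d) :
    IsAlmostRegular l (A + A') d := by
  intro ε hε
  filter_upwards [hA 1 one_pos, hA (ε / 2) (by positivity), hA' (ε / 2) (by positivity)]
    with m hA_one hA_half hA'_half u
  have hd := (pos_of_abs_div_sub_one_lt_one (Nat.cast_nonneg _) (hA_one u)).2
  have hA'_nonneg : 0 ≤ (deg (A' m) u : ℝ) / d m u := by positivity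
  have := abs_lt.1 (hA_half u)
  rw [Pi.add_apply, deg_add, Nat.cast_add, add_div, abs_lt]
  constructor <;> linarith [hA'_half u]

theorem IsAlmostRegular.tendsto_eigAsc_normLap_sub_normLap_add [∀ m, DecidableEq (V m)]
    (hA : IsAlmostRegular l A d) (hA' : HasNegligibleDegrees l A' d)
    (hsymm : ∀ m, (A m).IsSymm) (hsymm' : ∀ m, (A' m).IsSymm) (i : ℕ) :
    Tendsto (fun m => eigAsc (normLap (A m)) i - eigAsc (normLap (A m + A' m)) i) l (nhds 0) := by
  rw [Metric.tendsto_nhds]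
  intro ε hε
  filter_upwards [hA (1 / 2) (by norm_num), hA' (ε / 4 / 2) (by positivity)]
    with m hA_half hA'_small
  have hpos (u : V m) : 0 < deg (A m) u := by
    exact_mod_cast (pos_of_abs_div_sub_one_lt_one (Nat.cast_nonneg _)
      ((hA_half u).trans (by norm_num))).1
  have hsmall (u : V m) : (deg (A' m) u : ℝ) ≤ ε / 4 * deg (A m) u :=
    le_mul_of_abs_div_sub_one_lt (Nat.cast_nonneg _) (Nat.cast_nonneg _) (hA_half u)
      (hA'_small u)
  rw [Real.dist_0_eq_abs]
  calc _ ≤ 2 * (ε / 4) := abs_eigAsc_normLap_sub_normLap_add_le hpos hsmall (hsymm m)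
        (hsymm' m) (by positivity) i
    _ < ε := by linarith

end Asymptotics

lemma bipAdj_add {V₁ V₂ : Type*} (B B' : Matrix V₁ V₂ ℕ) :
    bipAdj (B + B') = bipAdj B + bipAdj B' := by
  rw [bipAdj, bipAdj, bipAdj, fromBlocks_add, transpose_add, add_zero, add_zero]

lemma isSymm_bipAdj {V₁ V₂ : Type*} (B : Matrix V₁ V₂ ℕ) : (bipAdj B).IsSymm :=
  isSymm_zero.fromBlocks rfl isSymm_zero

theorem lam1_union_small_bipartite_general {n₁ n₂ : ℕ → ℕ}
    (d₁ d₂ : ℕ → ℝ)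
    (B B' : ∀ m, Matrix (Fin (n₁ m)) (Fin (n₂ m)) ℕ)
    (hreg₁ : ∀ ε > (0 : ℝ), ∀ᶠ m in atTop,
      ∀ v, |(deg (bipAdj (B m)) (Sum.inl v) : ℝ) / d₁ m - 1| < ε)
    (hreg₂ : ∀ ε > (0 : ℝ), ∀ᶠ m in atTop,
      ∀ w, |(deg (bipAdj (B m)) (Sum.inr w) : ℝ) / d₂ m - 1| < ε)
    (hsmall₁ : ∀ ε > (0 : ℝ), ∀ᶠ m in atTop,
      ∀ v, (deg (bipAdj (B' m)) (Sum.inl v) : ℝ) / d₁ m < ε)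
    (hsmall₂ : ∀ ε > (0 : ℝ), ∀ᶠ m in atTop,
      ∀ w, (deg (bipAdj (B' m)) (Sum.inr w) : ℝ) / d₂ m < ε) :
    (∀ ε > (0 : ℝ), ∀ᶠ m in atTop,
      (∀ v, |(deg (bipAdj (B m + B' m)) (Sum.inl v) : ℝ) / d₁ m - 1| < ε) ∧
      (∀ w, |(deg (bipAdj (B m + B' m)) (Sum.inr w) : ℝ) / d₂ m - 1| < ε)) ∧
    Tendsto (fun m => lam1 (bipAdj (B m)) - lam1 (bipAdj (B m + B' m))) atTop (nhds 0) := by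
  let d m : Fin (n₁ m) ⊕ Fin (n₂ m) → ℝ := Sum.elim (fun _ => d₁ m) (fun _ => d₂ m)
  have hreg : IsAlmostRegular atTop (fun m => bipAdj (B m)) d := fun ε hε =>
    ((hreg₁ ε hε).and (hreg₂ ε hε)).mono fun _ h => Sum.forall.2 h
  have hsmall : HasNegligibleDegrees atTop (fun m => bipAdj (B' m)) d := fun ε hε =>
    ((hsmall₁ ε hε).and (hsmall₂ ε hε)).mono fun _ h => Sum.forall.2 h
  simp_rw [bipAdj_add]
  exact ⟨fun ε hε => (hreg.add hsmall ε hε).mono fun _ h => Sum.forall.1 h,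
    hreg.tendsto_eigAsc_normLap_sub_normLap_add hsmall (fun _ => isSymm_bipAdj _)
      (fun _ => isSymm_bipAdj _) 1⟩

/-- If `G_m` is an almost `(d¹_m, d²_m)`-regular family of bipartite
multigraphs (with `d¹_m, d²_m → ∞`) and `G'_m` are bipartite multigraphs on the same parts whose
maximum degrees on `V₁` resp. `V₂` are `o(d¹_m)` resp. `o(d²_m)`, then the union `G_m ∪ G'_m`
is almost `(d¹_m, d²_m)`-regular and `λ₁(G_m) - λ₁(G_m ∪ G'_m) → 0`. -/
theorem lam1_union_small_bipartite {n₁ n₂ : ℕ → ℕ}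
    (hn₁ : ∀ m, 0 < n₁ m) (hn₂ : ∀ m, 0 < n₂ m)
    (d₁ d₂ : ℕ → ℝ) (hd₁pos : ∀ m, 0 < d₁ m) (hd₂pos : ∀ m, 0 < d₂ m)
    (hd₁ : Tendsto d₁ atTop atTop) (hd₂ : Tendsto d₂ atTop atTop)
    (B B' : ∀ m, Matrix (Fin (n₁ m)) (Fin (n₂ m)) ℕ)
    (hreg₁ : ∀ ε > (0 : ℝ), ∀ᶠ m in atTop,
      ∀ v, |(deg (bipAdj (B m)) (Sum.inl v) : ℝ) / d₁ m - 1| < ε)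
    (hreg₂ : ∀ ε > (0 : ℝ), ∀ᶠ m in atTop,
      ∀ w, |(deg (bipAdj (B m)) (Sum.inr w) : ℝ) / d₂ m - 1| < ε)
    (hsmall₁ : ∀ ε > (0 : ℝ), ∀ᶠ m in atTop,
      ∀ v, (deg (bipAdj (B' m)) (Sum.inl v) : ℝ) / d₁ m < ε)
    (hsmall₂ : ∀ ε > (0 : ℝ), ∀ᶠ m in atTop,
      ∀ w, (deg (bipAdj (B' m)) (Sum.inr w) : ℝ) / d₂ m < ε) :
    (∀ ε > (0 : ℝ), ∀ᶠ m in atTop,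
      (∀ v, |(deg (bipAdj (B m + B' m)) (Sum.inl v) : ℝ) / d₁ m - 1| < ε) ∧
      (∀ w, |(deg (bipAdj (B m + B' m)) (Sum.inr w) : ℝ) / d₂ m - 1| < ε)) ∧
    Tendsto (fun m => lam1 (bipAdj (B m)) - lam1 (bipAdj (B m + B' m))) atTop (nhds 0) :=
  lam1_union_small_bipartite_general d₁ d₂ B B' hreg₁ hreg₂ hsmall₁ hsmall₂
end

section
/- Fix n ≥ 2, and for each k ≥ 3 let p = p(k) ∈ (0,1) satisfy (2n−1)^{2k−L_k} · p(k)³ → 0 and (2n−1)^{2k+l_k} · p(k)⁴ → 0 as k → ∞. Let R be the random subset of the set C(n,k) of cyclically reduced words of length k in F_n obtained by including each word independently with probability p(k), and let Σ_1, Σ_2, Σ_3 be the associated multigraphs. Then the probability that, for each i = 1, 2, 3, no two vertices of Σ_i are joined by three or more edges, and the unordered pairs of vertices of Σ_i joined by exactly two edges are pairwise vertex-disjoint (the double edges form a matching), tends to 1 as k → ∞. -/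
/-!
A first-moment argument. If two vertices of `Σᵢ` are joined by three edges, three distinct
relators have the same edge; if two double edges meet, four distinct relators form two pairs
with equal edges, the two edges sharing a vertex. A relator is determined by its three segments
and there are at most `2(2n-1)^m` reduced words of length `m`, so at most `4(2n-1)^{l_k+1}`
relators have a given edge, at most `8(2n-1)^{l_k+L_k+1}` edges meet a given vertex, and
`|C(n,k)| ≤ 2(2n-1)^k`. Each configuration is present with probability `p³`, resp. `p⁴`, so the
failure probability is `O((2n-1)^{2k-L_k} p³ + (2n-1)^{2k+l_k} p⁴)`.
-/

open Filter

/-- A letter in the alphabet `{a₁^{±1}, …, a_n^{±1}}`. -/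
abbrev Letter (n : ℕ) := Fin n × Bool

/-- A list of letters is reduced if no letter is followed by its inverse. -/
def IsRedList {n : ℕ} (w : List (Letter n)) : Prop :=
  w.Chain' fun a b => b ≠ (a.1, !a.2)

instance {n : ℕ} (w : List (Letter n)) : Decidable (IsRedList w) := by
  unfold IsRedList List.Chain'; infer_instance

/-- A list of letters is cyclically reduced if moreover its first letter is not the inverse of
its last letter. -/
def IsCycList {n : ℕ} (w : List (Letter n)) : Prop :=
  ∀ a ∈ w.head?, ∀ b ∈ w.getLast?, a ≠ (b.1, !b.2)

instance {n : ℕ} (w : List (Letter n)) : Decidable (IsCycList w) := by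
  unfold IsCycList; infer_instance

/-- `CWord n k`: cyclically reduced words of length `k` in the free group on `n` generators. -/
def CWord (n k : ℕ) :=
  {w : List.Vector (Letter n) k // IsRedList w.toList ∧ IsCycList w.toList}

instance (n k : ℕ) : DecidableEq (CWord n k) := by unfold CWord; infer_instance
instance (n k : ℕ) : Fintype (CWord n k) := by unfold CWord; exact Subtype.fintype _

/-- The inverse of a word: reverse the word and invert each letter. -/
def linv {n : ℕ} (w : List (Letter n)) : List (Letter n) :=
  w.reverse.map fun a => (a.1, !a.2)

/-- `l_k` from the paper: `k/3`, `(k-1)/3`, `(k+1)/3` according to `k mod 3 = 0, 1, 2`. -/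
def lk (k : ℕ) : ℕ :=
  if k % 3 = 0 then k / 3 else if k % 3 = 1 then (k - 1) / 3 else (k + 1) / 3

/-- `L_k` from the paper: `k/3`, `(k+2)/3`, `(k-2)/3` according to `k mod 3 = 0, 1, 2`,
so `2l_k + L_k = k`. -/
def Lk (k : ℕ) : ℕ :=
  if k % 3 = 0 then k / 3 else if k % 3 = 1 then (k + 2) / 3 else (k - 2) / 3

/-- The unordered pair of endpoints `{r_x, r_z⁻¹}` of the `Σ₁`-edge of a relator `r`,
where `r = r_x r_y r_z` with `|r_x| = |r_y| = l_k` and `|r_z| = L_k`. -/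
def edge1 {n k : ℕ} (r : CWord n k) : Sym2 (List (Letter n)) :=
  s(r.1.toList.take (lk k), linv (r.1.toList.drop (2 * lk k)))

/-- The unordered pair of endpoints `{r_y, r_x⁻¹}` of the `Σ₂`-edge of a relator `r`. -/
def edge2 {n k : ℕ} (r : CWord n k) : Sym2 (List (Letter n)) :=
  s((r.1.toList.drop (lk k)).take (lk k), linv (r.1.toList.take (lk k)))

/-- The unordered pair of endpoints `{r_z, r_y⁻¹}` of the `Σ₃`-edge of a relator `r`. -/
def edge3 {n k : ℕ} (r : CWord n k) : Sym2 (List (Letter n)) :=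
  s(r.1.toList.drop (2 * lk k), linv ((r.1.toList.drop (lk k)).take (lk k)))

/-- The number of edges joining `u` and `v` in the multigraph `Σ` whose edges have endpoint
pairs `ep r` for relators `r` in the random set `R = {r | ω r = true}`. -/
def multE {n k : ℕ} (ep : CWord n k → Sym2 (List (Letter n))) (ω : CWord n k → Bool)
    (u v : List (Letter n)) : ℕ :=
  (Finset.univ.filter fun r : CWord n k => ω r = true ∧ ep r = s(u, v)).card

/-- Bernoulli weight of a Boolean value. -/
def bern (p : ℝ) (b : Bool) : ℝ := if b then p else 1 - p

/-- Probability of the event `E` for the random set of relators obtained by including each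
cyclically reduced word of length `k` independently with probability `p`. -/
noncomputable def cProb (n k : ℕ) (p : ℝ) (E : Set (CWord n k → Bool)) : ℝ :=
  haveI := Classical.dec
  ∑ ω : CWord n k → Bool, if ω ∈ E then ∏ r, bern p (ω r) else 0

/-- No two vertices of `Σ` are joined by three or more edges, and the double edges of `Σ`
form a matching (the endpoints of distinct double edges are pairwise distinct). -/
def doubleEdgesMatch {n k : ℕ} (ep : CWord n k → Sym2 (List (Letter n)))
    (ω : CWord n k → Bool) : Prop :=
  (∀ u v, multE ep ω u v ≤ 2) ∧
  (∀ u v u' v', multE ep ω u v = 2 → multE ep ω u' v' = 2 → s(u, v) ≠ s(u', v') →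
    u ≠ u' ∧ u ≠ v' ∧ v ≠ u' ∧ v ≠ v')

lemma two_mul_lk_add_Lk (k : ℕ) : 2 * lk k + Lk k = k := by
  unfold lk Lk; split_ifs <;> omega

lemma Lk_le_lk_add_one (k : ℕ) : Lk k ≤ lk k + 1 := by
  unfold lk Lk; split_ifs <;> omega

lemma lk_le_Lk_add_one (k : ℕ) : lk k ≤ Lk k + 1 := by
  unfold lk Lk; split_ifs <;> omega

namespace ReducedWord

open Finset

variable {n : ℕ}

lemma card_letter : Fintype.card (Letter n) = 2 * n := by
  simp [Fintype.card_prod, mul_comm]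

lemma linv_linv (w : List (Letter n)) : linv (linv w) = w := by
  simp [linv, List.map_reverse, Function.comp_def]

lemma linv_injective : Function.Injective (linv (n := n)) :=
  Function.LeftInverse.injective linv_linv

-- `a :: b :: t` is reduced only if `a ≠ b⁻¹`, which leaves `2n - 1` choices for `a`.
lemma card_filter_tail_eq_le {L : Finset (List (Letter n))} (hL : ∀ w ∈ L, IsRedList w)
    (b : Letter n) (t : List (Letter n)) :
    (L.filter fun w => w.tail = b :: t).card ≤ 2 * n - 1 := by
  classical
  calc (L.filter fun w => w.tail = b :: t).card
      ≤ ((univ.erase (b.1, !b.2)).image fun a => a :: b :: t).card := by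
        refine card_le_card fun w hw => ?_
        obtain ⟨hwL, hwt⟩ := mem_filter.mp hw
        obtain ⟨a, rfl⟩ : ∃ a, w = a :: b :: t := by
          cases w with
          | nil => simp at hwt
          | cons a w => exact ⟨a, by rw [← hwt]; rfl⟩
        have hab : b ≠ (a.1, !a.2) := (List.isChain_cons_cons.mp (hL _ hwL)).1
        refine mem_image.mpr ⟨a, mem_erase.mpr ⟨fun h => hab ?_, mem_univ _⟩, rfl⟩
        simp [h]
    _ ≤ (univ.erase (b.1, !b.2)).card := card_image_le
    _ = 2 * n - 1 := by rw [card_erase_of_mem (mem_univ _), card_univ, card_letter]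

lemma card_reduced_succ_le : ∀ (f : ℕ) (L : Finset (List (Letter n))),
    (∀ w ∈ L, IsRedList w ∧ w.length = f + 1) → L.card ≤ 2 * n * (2 * n - 1) ^ f
  | 0, L, hL => by
    classical
    calc L.card ≤ (univ.image fun a : Letter n => [a]).card := by
          refine card_le_card fun w hw => ?_
          obtain ⟨a, rfl⟩ := List.length_eq_one_iff.mp (hL w hw).2
          exact mem_image_of_mem _ (mem_univ a)
      _ ≤ (univ : Finset (Letter n)).card := card_image_le
      _ = 2 * n * (2 * n - 1) ^ 0 := by rw [card_univ, card_letter, pow_zero, mul_one]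
  | f + 1, L, hL => by
    classical
    have htail : ∀ t ∈ L.image List.tail, IsRedList t ∧ t.length = f + 1 := by
      intro t ht
      obtain ⟨w, hw, rfl⟩ := mem_image.mp ht
      exact ⟨(hL w hw).1.tail, by simp [(hL w hw).2]⟩
    have hfiber : ∀ t ∈ L.image List.tail, (L.filter fun w => w.tail = t).card ≤ 2 * n - 1 := by
      intro t ht
      obtain ⟨b, t', rfl⟩ := List.exists_cons_of_length_eq_add_one (htail t ht).2
      exact card_filter_tail_eq_le (fun w hw => (hL w hw).1) b t'
    calc L.card ≤ (2 * n - 1) * (L.image List.tail).card := card_le_mul_card_image L _ hfiber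
      _ ≤ (2 * n - 1) * (2 * n * (2 * n - 1) ^ f) :=
          Nat.mul_le_mul_left _ (card_reduced_succ_le f _ htail)
      _ = 2 * n * (2 * n - 1) ^ (f + 1) := by ring

lemma card_reduced_le {f : ℕ} (L : Finset (List (Letter n)))
    (hL : ∀ w ∈ L, IsRedList w ∧ w.length = f) : L.card ≤ 2 * (2 * n - 1) ^ f := by
  cases f with
  | zero =>
    have : L ⊆ {[]} := fun w hw => by simpa using (hL w hw).2
    simpa using (card_le_card this).trans (by norm_num)
  | succ f =>
    calc L.card ≤ 2 * n * (2 * n - 1) ^ f := card_reduced_succ_le f L hL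
      _ ≤ 2 * (2 * n - 1) * (2 * n - 1) ^ f := by gcongr; omega
      _ = 2 * (2 * n - 1) ^ (f + 1) := by ring

variable {γ : Type*}

lemma card_le_of_injOn_reduced {f : ℕ} (S : Finset γ) (g : γ → List (Letter n))
    (hg : ∀ r ∈ S, IsRedList (g r) ∧ (g r).length = f) (hinj : Set.InjOn g S) :
    S.card ≤ 2 * (2 * n - 1) ^ f := by
  classical
  rw [← card_image_of_injOn hinj]
  refine card_reduced_le _ fun w hw => ?_
  obtain ⟨r, hr, rfl⟩ := mem_image.mp hw
  exact hg r hr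

lemma card_le_of_injOn_reduced_pair {f₁ f₂ : ℕ} (S : Finset γ) (g₁ g₂ : γ → List (Letter n))
    (hg₁ : ∀ r ∈ S, IsRedList (g₁ r) ∧ (g₁ r).length = f₁)
    (hg₂ : ∀ r ∈ S, IsRedList (g₂ r) ∧ (g₂ r).length = f₂)
    (hinj : Set.InjOn (fun r => (g₁ r, g₂ r)) S) :
    S.card ≤ 4 * (2 * n - 1) ^ (f₁ + f₂) := by
  classical
  have himage : ∀ {f} (g : γ → List (Letter n)), (∀ r ∈ S, IsRedList (g r) ∧ (g r).length = f) →
      (S.image g).card ≤ 2 * (2 * n - 1) ^ f := fun g hg =>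
    card_reduced_le _ (by simpa using hg)
  calc S.card ≤ (S.image g₁ ×ˢ S.image g₂).card :=
        card_le_card_of_injOn _
          (fun r hr => mem_product.mpr ⟨mem_image_of_mem _ hr, mem_image_of_mem _ hr⟩) hinj
    _ = (S.image g₁).card * (S.image g₂).card := card_product _ _
    _ ≤ 2 * (2 * n - 1) ^ f₁ * (2 * (2 * n - 1) ^ f₂) :=
        Nat.mul_le_mul (himage g₁ hg₁) (himage g₂ hg₂)
    _ = 4 * (2 * n - 1) ^ (f₁ + f₂) := by ring

variable [Fintype γ] [DecidableEq γ] {a b c : γ → List (Letter n)} {la lb lc : ℕ}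

lemma card_filter_sym2_eq_le (hc : ∀ r, IsRedList (c r) ∧ (c r).length = lc)
    (habc : ∀ r r', a r = a r' → b r = b r' → c r = c r' → r = r')
    (e : Sym2 (List (Letter n))) :
    (univ.filter fun r => s(a r, linv (b r)) = e).card ≤ 4 * (2 * n - 1) ^ lc := by
  have hfix : ∀ u v,
      (univ.filter fun r => a r = u ∧ linv (b r) = v).card ≤ 2 * (2 * n - 1) ^ lc :=
    fun u v => card_le_of_injOn_reduced _ c (fun r _ => hc r) fun r hr r' hr' h => by
      simp only [coe_filter, mem_univ, true_and, Set.mem_ofPred_eq] at hr hr'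
      exact habc r r' (hr.1.trans hr'.1.symm) (linv_injective (hr.2.trans hr'.2.symm)) h
  induction e using Sym2.ind with
  | _ u v =>
    calc (univ.filter fun r => s(a r, linv (b r)) = s(u, v)).card
        ≤ (univ.filter (fun r => a r = u ∧ linv (b r) = v) ∪
            univ.filter fun r => a r = v ∧ linv (b r) = u).card :=
          card_le_card fun r hr => by simpa [Sym2.eq_iff] using hr
      _ ≤ 4 * (2 * n - 1) ^ lc := (card_union_le _ _).trans (by linarith [hfix u v, hfix v u])

lemma card_filter_mem_sym2_le (ha : ∀ r, IsRedList (a r) ∧ (a r).length = la)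
    (hb : ∀ r, IsRedList (b r) ∧ (b r).length = lb)
    (hc : ∀ r, IsRedList (c r) ∧ (c r).length = lc)
    (habc : ∀ r r', a r = a r' → b r = b r' → c r = c r' → r = r') (w : List (Letter n)) :
    (univ.filter fun r => w ∈ s(a r, linv (b r))).card ≤
      4 * (2 * n - 1) ^ (lb + lc) + 4 * (2 * n - 1) ^ (la + lc) := by
  calc (univ.filter fun r => w ∈ s(a r, linv (b r))).card
      ≤ (univ.filter (a · = w) ∪ univ.filter (b · = linv w)).card := by
        refine card_le_card fun r hr => ?_
        simp only [mem_filter, mem_univ, true_and, Sym2.mem_iff, mem_union] at hr ⊢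
        rcases hr with rfl | rfl
        exacts [Or.inl rfl, Or.inr (linv_linv _).symm]
    _ ≤ _ := by
        refine (card_union_le _ _).trans (add_le_add ?_ ?_)
        · refine card_le_of_injOn_reduced_pair _ b c (fun r _ => hb r) (fun r _ => hc r) ?_
          intro r hr r' hr' h
          simp only [coe_filter, mem_univ, true_and, Set.mem_ofPred_eq, Prod.mk.injEq] at hr hr' h
          exact habc r r' (hr.trans hr'.symm) h.1 h.2
        · refine card_le_of_injOn_reduced_pair _ a c (fun r _ => ha r) (fun r _ => hc r) ?_
          intro r hr r' hr' h
          simp only [coe_filter, mem_univ, true_and, Set.mem_ofPred_eq, Prod.mk.injEq] at hr hr' h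
          exact habc r r' h.1 (hr.trans hr'.symm) h.2

end ReducedWord

namespace CWord

open ReducedWord

variable {n k : ℕ}

def xPart (r : CWord n k) : List (Letter n) := r.1.toList.take (lk k)

def yPart (r : CWord n k) : List (Letter n) := (r.1.toList.drop (lk k)).take (lk k)

def zPart (r : CWord n k) : List (Letter n) := r.1.toList.drop (2 * lk k)

lemma xPart_spec (r : CWord n k) : IsRedList r.xPart ∧ r.xPart.length = lk k := by
  have := two_mul_lk_add_Lk k
  exact ⟨r.2.1.take _, by
    simp only [xPart, List.length_take, List.Vector.toList_length, inf_eq_left]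
    omega⟩

lemma yPart_spec (r : CWord n k) : IsRedList r.yPart ∧ r.yPart.length = lk k := by
  have := two_mul_lk_add_Lk k
  exact ⟨(r.2.1.drop _).take _, by
    simp only [yPart, List.length_take, List.length_drop, List.Vector.toList_length, inf_eq_left]
    omega⟩

lemma zPart_spec (r : CWord n k) : IsRedList r.zPart ∧ r.zPart.length = Lk k := by
  have := two_mul_lk_add_Lk k
  exact ⟨r.2.1.drop _, by simp only [zPart, List.length_drop, List.Vector.toList_length]; omega⟩

lemma xPart_append_yPart_append_zPart (r : CWord n k) :
    r.xPart ++ r.yPart ++ r.zPart = r.1.toList := by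
  rw [xPart, yPart, zPart, two_mul, ← List.drop_drop, List.append_assoc, List.take_append_drop,
    List.take_append_drop]

lemma ext_parts {r r' : CWord n k} (hx : r.xPart = r'.xPart) (hy : r.yPart = r'.yPart)
    (hz : r.zPart = r'.zPart) : r = r' :=
  Subtype.ext <| List.Vector.toList_injective <| by
    rw [← xPart_append_yPart_append_zPart, ← xPart_append_yPart_append_zPart, hx, hy, hz]

lemma card_le_two_mul_pow : Fintype.card (CWord n k) ≤ 2 * (2 * n - 1) ^ k :=
  card_le_of_injOn_reduced Finset.univ (fun r : CWord n k => r.1.toList)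
    (fun r _ => ⟨r.2.1, by simp⟩) fun _ _ _ _ h => Subtype.ext (List.Vector.toList_injective h)

end CWord

namespace EdgeMultiset

open Finset

variable {γ α : Type*} [Fintype γ] [DecidableEq γ] [DecidableEq α] (ep : γ → Sym2 α)

def sameEdgeTriples : Finset (γ × γ × γ) :=
  univ.filter fun t => ep t.2.1 = ep t.1 ∧ ep t.2.2 = ep t.1 ∧
    t.1 ≠ t.2.1 ∧ t.1 ≠ t.2.2 ∧ t.2.1 ≠ t.2.2

open Classical in
noncomputable def adjacentDoubleEdges : Finset (γ × γ × γ × γ) :=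
  univ.filter fun q => ep q.2.1 = ep q.1 ∧ ep q.2.2.2 = ep q.2.2.1 ∧
    q.1 ≠ q.2.1 ∧ q.2.2.1 ≠ q.2.2.2 ∧ ep q.1 ≠ ep q.2.2.1 ∧ ∃ w ∈ ep q.1, w ∈ ep q.2.2.1

variable {ep}

lemma card_of_mem_sameEdgeTriples {t : γ × γ × γ} (ht : t ∈ sameEdgeTriples ep) :
    ({t.1, t.2.1, t.2.2} : Finset γ).card = 3 := by
  obtain ⟨-, -, -, h₁₂, h₁₃, h₂₃⟩ := mem_filter.mp ht
  exact card_eq_three.mpr ⟨_, _, _, h₁₂, h₁₃, h₂₃, rfl⟩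

lemma card_of_mem_adjacentDoubleEdges {q : γ × γ × γ × γ} (hq : q ∈ adjacentDoubleEdges ep) :
    ({q.1, q.2.1, q.2.2.1, q.2.2.2} : Finset γ).card = 4 := by
  classical
  obtain ⟨-, h₂, h₄, h₁₂, h₃₄, hne, -⟩ := mem_filter.mp hq
  obtain ⟨a, b, c, d⟩ := q
  have hac : a ≠ c := fun h => hne (by rw [h])
  have had : a ≠ d := fun h => hne (by rw [h, h₄])
  have hbc : b ≠ c := fun h => hne (by rw [← h₂, h])
  have hbd : b ≠ d := fun h => hne (by rw [← h₂, h, h₄])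
  rw [card_insert_of_notMem (by simp [h₁₂, hac, had]), card_insert_of_notMem (by simp [hbc, hbd]),
    card_pair h₃₄]

variable {F G : ℕ}

lemma card_sameEdgeTriples_le (hF : ∀ e, (univ.filter (ep · = e)).card ≤ F) :
    (sameEdgeTriples ep).card ≤ Fintype.card γ * (F * F) := by
  set fiber : γ → Finset γ := fun a => univ.filter (ep · = ep a)
  calc (sameEdgeTriples ep).card
      ≤ (univ.biUnion fun a => {a} ×ˢ (fiber a ×ˢ fiber a)).card := by
        refine card_le_card fun t ht => ?_
        obtain ⟨-, h₂, h₃, -⟩ := mem_filter.mp ht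
        simp only [mem_biUnion, mem_product, mem_singleton, mem_filter, mem_univ, true_and, fiber]
        exact ⟨t.1, rfl, h₂, h₃⟩
    _ ≤ (univ : Finset γ).card * (F * F) := by
        refine card_biUnion_le_card_mul _ _ _ fun a _ => ?_
        rw [card_product, card_product, card_singleton, one_mul]
        exact Nat.mul_le_mul (hF _) (hF _)

open Classical in
lemma card_filter_adjacent_le (hG : ∀ w, (univ.filter (w ∈ ep ·)).card ≤ G) (e : Sym2 α) :
    (univ.filter fun c => ∃ w ∈ e, w ∈ ep c).card ≤ 2 * G := by
  induction e using Sym2.ind with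
  | _ u v =>
    calc (univ.filter fun c => ∃ w ∈ s(u, v), w ∈ ep c).card
        ≤ (univ.filter (u ∈ ep ·) ∪ univ.filter (v ∈ ep ·)).card := by
          refine card_le_card fun c hc => ?_
          simpa using hc
      _ ≤ 2 * G := (card_union_le _ _).trans (by linarith [hG u, hG v])

lemma card_adjacentDoubleEdges_le (hF : ∀ e, (univ.filter (ep · = e)).card ≤ F)
    (hG : ∀ w, (univ.filter (w ∈ ep ·)).card ≤ G) :
    (adjacentDoubleEdges ep).card ≤ Fintype.card γ * (F * (2 * G * F)) := by
  classical
  set fiber : γ → Finset γ := fun a => univ.filter (ep · = ep a)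
  set adjacent : γ → Finset γ := fun a => univ.filter fun c => ∃ w ∈ ep a, w ∈ ep c
  calc (adjacentDoubleEdges ep).card
      ≤ (univ.biUnion fun a => {a} ×ˢ (fiber a ×ˢ
          (adjacent a).biUnion fun c => {c} ×ˢ fiber c)).card := by
        refine card_le_card fun q hq => ?_
        obtain ⟨-, h₂, h₄, -, -, -, hw⟩ := mem_filter.mp hq
        simp only [mem_biUnion, mem_product, mem_singleton, mem_filter, mem_univ, true_and, fiber,
          adjacent]
        exact ⟨q.1, rfl, h₂, q.2.2.1, hw, rfl, h₄⟩
    _ ≤ (univ : Finset γ).card * (F * (2 * G * F)) := by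
        refine card_biUnion_le_card_mul _ _ _ fun a _ => ?_
        rw [card_product, card_product, card_singleton, one_mul]
        refine Nat.mul_le_mul (hF _) ((card_biUnion_le_card_mul _ _ F fun c _ => ?_).trans ?_)
        · rw [card_product, card_singleton, one_mul]
          exact hF _
        · exact Nat.mul_le_mul_right _ (card_filter_adjacent_le hG _)

end EdgeMultiset

section

open Finset

variable {n k : ℕ} {p : ℝ}

lemma bern_nonneg (hp0 : 0 ≤ p) (hp1 : p ≤ 1) (b : Bool) : 0 ≤ bern p b := by
  cases b <;> simp [bern] <;> linarith

lemma cProb_eq_sum_indicator (E : Set (CWord n k → Bool)) :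
    cProb n k p E = ∑ ω, E.indicator (fun ω => ∏ r, bern p (ω r)) ω := by
  classical
  simp only [cProb, Set.indicator_apply]
  congr!

lemma cProb_nonneg (hp0 : 0 ≤ p) (hp1 : p ≤ 1) (E : Set (CWord n k → Bool)) :
    0 ≤ cProb n k p E := by
  rw [cProb_eq_sum_indicator]
  exact sum_nonneg fun ω _ =>
    Set.indicator_nonneg (fun ω _ => prod_nonneg fun r _ => bern_nonneg hp0 hp1 _) ω

lemma cProb_mono (hp0 : 0 ≤ p) (hp1 : p ≤ 1) {E E' : Set (CWord n k → Bool)} (h : E ⊆ E') :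
    cProb n k p E ≤ cProb n k p E' := by
  simp only [cProb_eq_sum_indicator]
  exact sum_le_sum fun ω _ => Set.indicator_le_indicator_of_subset h
    (fun ω => prod_nonneg fun r _ => bern_nonneg hp0 hp1 _) ω

lemma cProb_biUnion_le (hp0 : 0 ≤ p) (hp1 : p ≤ 1) {ι : Type*} (T : Finset ι)
    (E : ι → Set (CWord n k → Bool)) :
    cProb n k p {ω | ∃ t ∈ T, ω ∈ E t} ≤ ∑ t ∈ T, cProb n k p (E t) := by
  simp only [cProb_eq_sum_indicator]
  rw [sum_comm]
  refine sum_le_sum fun ω _ => ?_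
  have hnonneg : ∀ t ∈ T, 0 ≤ (E t).indicator (fun ω => ∏ r, bern p (ω r)) ω :=
    fun t _ => Set.indicator_nonneg (fun ω _ => prod_nonneg fun r _ => bern_nonneg hp0 hp1 _) ω
  by_cases h : ∃ t ∈ T, ω ∈ E t
  · obtain ⟨t, ht, hωt⟩ := h
    rw [Set.indicator_of_mem (show ω ∈ {ω | ∃ t ∈ T, ω ∈ E t} from ⟨t, ht, hωt⟩)]
    rw [← Set.indicator_of_mem hωt (fun ω => ∏ r, bern p (ω r))]
    exact single_le_sum hnonneg ht
  · rw [Set.indicator_of_notMem (show ω ∉ {ω | ∃ t ∈ T, ω ∈ E t} from h)]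
    exact sum_nonneg hnonneg

lemma cProb_union_le (hp0 : 0 ≤ p) (hp1 : p ≤ 1) (A B : Set (CWord n k → Bool)) :
    cProb n k p (A ∪ B) ≤ cProb n k p A + cProb n k p B := by
  have h := cProb_biUnion_le hp0 hp1 (n := n) (k := k) (Finset.univ : Finset Bool)
    (fun b => if b then A else B)
  convert h using 2
  · ext ω; simp [or_comm]
  · simp

-- The sum over `ω` factorises coordinatewise: `r ∈ S` contributes `p`, any other `r` contributes
-- `p + (1 - p) = 1`.
lemma cProb_forall_true (p : ℝ) (S : Finset (CWord n k)) :
    cProb n k p {ω | ∀ r ∈ S, ω r = true} = p ^ S.card := by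
  classical
  set g : CWord n k → Bool → ℝ := fun r b => if r ∈ S ∧ b = false then 0 else bern p b
  have hind : ∀ ω : CWord n k → Bool,
      {ω | ∀ r ∈ S, ω r = true}.indicator (fun ω => ∏ r, bern p (ω r)) ω = ∏ r, g r (ω r) := by
    intro ω
    by_cases h : ∀ r ∈ S, ω r = true
    · rw [Set.indicator_of_mem (show ω ∈ {ω | ∀ r ∈ S, ω r = true} from h)]
      refine prod_congr rfl fun r _ => ?_
      by_cases hr : r ∈ S <;> simp [g, hr, h]
    · rw [Set.indicator_of_notMem (show ω ∉ {ω | ∀ r ∈ S, ω r = true} from h)]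
      simp only [not_forall] at h
      obtain ⟨r, hr, hωr⟩ := h
      exact (prod_eq_zero (mem_univ r) (by simp [g, hr, hωr])).symm
  have hsum : ∀ r, ∑ b, g r b = if r ∈ S then p else 1 := by
    intro r
    by_cases hr : r ∈ S <;> simp [g, hr, bern]
  rw [cProb_eq_sum_indicator, Fintype.sum_congr _ _ hind, ← Fintype.prod_sum,
    Fintype.prod_congr _ _ hsum, prod_ite_mem, univ_inter, prod_const]

lemma cProb_compl (p : ℝ) (E : Set (CWord n k → Bool)) :
    cProb n k p E = 1 - cProb n k p Eᶜ := by
  have huniv : cProb n k p Set.univ = 1 := by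
    simpa using cProb_forall_true (n := n) (k := k) p ∅
  rw [← huniv]
  simp only [cProb_eq_sum_indicator, Set.indicator_compl, Set.indicator_univ, Pi.sub_apply,
    sum_sub_distrib]
  ring

lemma cProb_exists_forall_le (hp0 : 0 ≤ p) (hp1 : p ≤ 1) {ι : Type*} (T : Finset ι)
    (S : ι → Finset (CWord n k)) {m : ℕ} (hS : ∀ t ∈ T, (S t).card = m) :
    cProb n k p {ω | ∃ t ∈ T, ∀ r ∈ S t, ω r = true} ≤ T.card * p ^ m := by
  calc cProb n k p {ω | ∃ t ∈ T, ∀ r ∈ S t, ω r = true}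
      ≤ ∑ t ∈ T, cProb n k p {ω | ∀ r ∈ S t, ω r = true} :=
        cProb_biUnion_le hp0 hp1 T fun t => {ω | ∀ r ∈ S t, ω r = true}
    _ = T.card * p ^ m := by
        rw [sum_congr rfl fun t ht => by rw [cProb_forall_true, hS t ht], sum_const, nsmul_eq_mul]

open EdgeMultiset

variable {ep : CWord n k → Sym2 (List (Letter n))} {ω : CWord n k → Bool}

lemma exists_sameEdgeTriples_of_two_lt_multE {u v : List (Letter n)} (h : 2 < multE ep ω u v) :
    ∃ t ∈ sameEdgeTriples ep, ∀ r ∈ ({t.1, t.2.1, t.2.2} : Finset _), ω r = true := by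
  obtain ⟨a, b, c, ha, hb, hc, hab, hac, hbc⟩ := two_lt_card_iff.mp h
  simp only [mem_filter, mem_univ, true_and] at ha hb hc
  refine ⟨(a, b, c), mem_filter.mpr ⟨mem_univ _, hb.2.trans ha.2.symm, hc.2.trans ha.2.symm,
    hab, hac, hbc⟩, ?_⟩
  simp [ha.1, hb.1, hc.1]

lemma exists_adjacentDoubleEdges_of_multE_eq_two {u v u' v' : List (Letter n)}
    (h : multE ep ω u v = 2) (h' : multE ep ω u' v' = 2) (hne : s(u, v) ≠ s(u', v'))
    (hw : ∃ w ∈ s(u, v), w ∈ s(u', v')) :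
    ∃ q ∈ adjacentDoubleEdges ep,
      ∀ r ∈ ({q.1, q.2.1, q.2.2.1, q.2.2.2} : Finset _), ω r = true := by
  classical
  obtain ⟨a, b, hab, hs⟩ := card_eq_two.mp h
  obtain ⟨c, d, hcd, hs'⟩ := card_eq_two.mp h'
  have hmem : ∀ x ∈ ({a, b} : Finset _), ω x = true ∧ ep x = s(u, v) := fun x hx => by
    rw [← hs] at hx; simpa using hx
  have hmem' : ∀ x ∈ ({c, d} : Finset _), ω x = true ∧ ep x = s(u', v') := fun x hx => by
    rw [← hs'] at hx; simpa using hx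
  obtain ⟨⟨ha, hea⟩, ⟨hb, heb⟩⟩ := And.intro (hmem a (by simp)) (hmem b (by simp))
  obtain ⟨⟨hc, hec⟩, ⟨hd, hed⟩⟩ := And.intro (hmem' c (by simp)) (hmem' d (by simp))
  refine ⟨(a, b, c, d), mem_filter.mpr ⟨mem_univ _, ?_⟩, by simp [ha, hb, hc, hd]⟩
  rw [hea, heb, hec, hed]
  exact ⟨rfl, rfl, hab, hcd, hne, hw⟩

variable (ep) in
lemma not_doubleEdgesMatch_subset :
    {ω | ¬ doubleEdgesMatch ep ω} ⊆
      {ω | ∃ t ∈ sameEdgeTriples ep, ∀ r ∈ ({t.1, t.2.1, t.2.2} : Finset _), ω r = true} ∪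
      {ω | ∃ q ∈ adjacentDoubleEdges ep,
        ∀ r ∈ ({q.1, q.2.1, q.2.2.1, q.2.2.2} : Finset _), ω r = true} := by
  intro ω hω
  simp only [doubleEdgesMatch, not_and_or, not_forall, not_le, Set.mem_ofPred_eq] at hω
  rcases hω with ⟨u, v, h⟩ | ⟨u, v, u', v', h, h', hne, hw⟩
  · exact Or.inl (exists_sameEdgeTriples_of_two_lt_multE h)
  · refine Or.inr (exists_adjacentDoubleEdges_of_multE_eq_two h h' hne ?_)
    simp only [Sym2.mem_iff, exists_eq_or_imp, exists_eq_left]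
    tauto

variable {F G : ℕ}

theorem cProb_not_doubleEdgesMatch_le (hp0 : 0 ≤ p) (hp1 : p ≤ 1)
    (hF : ∀ e, (univ.filter (ep · = e)).card ≤ F)
    (hG : ∀ w, (univ.filter (w ∈ ep ·)).card ≤ G) :
    cProb n k p {ω | ¬ doubleEdgesMatch ep ω} ≤
      ((Fintype.card (CWord n k) * (F * F) : ℕ) : ℝ) * p ^ 3 +
      ((Fintype.card (CWord n k) * (F * (2 * G * F)) : ℕ) : ℝ) * p ^ 4 := by
  calc cProb n k p {ω | ¬ doubleEdgesMatch ep ω}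
      ≤ cProb n k p _ := cProb_mono hp0 hp1 (not_doubleEdgesMatch_subset ep)
    _ ≤ _ + _ := cProb_union_le hp0 hp1 _ _
    _ ≤ (sameEdgeTriples ep).card * p ^ 3 + (adjacentDoubleEdges ep).card * p ^ 4 :=
        add_le_add
          (cProb_exists_forall_le hp0 hp1 _ _ fun _ => card_of_mem_sameEdgeTriples)
          (cProb_exists_forall_le hp0 hp1 _ _ fun _ => card_of_mem_adjacentDoubleEdges)
    _ ≤ _ := by
        gcongr
        · exact card_sameEdgeTriples_le hF
        · exact card_adjacentDoubleEdges_le hF hG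

end

open Finset ReducedWord CWord

-- With `N = 2n - 1`: `32 = 2 · 4²` and `512 = 2 · 4 · (2 · 8) · 4` come from `|C(n,k)| ≤ 2N^k`,
-- edge multiplicities `≤ 4N^{l_k+1}` and vertex degrees `≤ 8N^{l_k+L_k+1}`.
def failureBound (n k : ℕ) (p : ℝ) : ℝ :=
  32 * (2 * (n : ℝ) - 1) ^ 2 * ((2 * (n : ℝ) - 1) ^ (2 * k - Lk k) * p ^ 3) +
    512 * (2 * (n : ℝ) - 1) ^ 3 * ((2 * (n : ℝ) - 1) ^ (2 * k + lk k) * p ^ 4)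

lemma tendsto_failureBound {n : ℕ} {p : ℕ → ℝ}
    (h1 : Tendsto (fun k : ℕ => (2 * (n : ℝ) - 1) ^ (2 * k - Lk k) * p k ^ 3) atTop (nhds 0))
    (h2 : Tendsto (fun k : ℕ => (2 * (n : ℝ) - 1) ^ (2 * k + lk k) * p k ^ 4) atTop (nhds 0)) :
    Tendsto (fun k => failureBound n k (p k)) atTop (nhds 0) := by
  simpa only [failureBound, mul_zero, add_zero] using (h1.const_mul _).add (h2.const_mul _)

section

variable {n k : ℕ} {p : ℝ}

lemma card_mul_pow_add_le_failureBound (hn : 1 ≤ n) (hp0 : 0 ≤ p) :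
    ((Fintype.card (CWord n k) * (4 * (2 * n - 1) ^ (lk k + 1) * (4 * (2 * n - 1) ^ (lk k + 1)))
      : ℕ) : ℝ) * p ^ 3 +
    ((Fintype.card (CWord n k) * (4 * (2 * n - 1) ^ (lk k + 1) *
      (2 * (8 * (2 * n - 1) ^ (lk k + Lk k + 1)) * (4 * (2 * n - 1) ^ (lk k + 1)))) : ℕ) : ℝ) *
      p ^ 4 ≤ failureBound n k p := by
  set N := 2 * n - 1 with hN
  have hk := two_mul_lk_add_Lk k
  have h3 : Fintype.card (CWord n k) * (4 * N ^ (lk k + 1) * (4 * N ^ (lk k + 1))) ≤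
      32 * N ^ 2 * N ^ (2 * k - Lk k) :=
    calc _ ≤ 2 * N ^ k * (4 * N ^ (lk k + 1) * (4 * N ^ (lk k + 1))) :=
          Nat.mul_le_mul_right _ CWord.card_le_two_mul_pow
      _ = 32 * N ^ 2 * N ^ (2 * k - Lk k) := by
          rw [show 2 * k - Lk k = k + lk k + lk k by omega]; ring
  have h4 : Fintype.card (CWord n k) * (4 * N ^ (lk k + 1) *
      (2 * (8 * N ^ (lk k + Lk k + 1)) * (4 * N ^ (lk k + 1)))) ≤
      512 * N ^ 3 * N ^ (2 * k + lk k) :=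
    calc _ ≤ 2 * N ^ k * (4 * N ^ (lk k + 1) *
          (2 * (8 * N ^ (lk k + Lk k + 1)) * (4 * N ^ (lk k + 1)))) :=
          Nat.mul_le_mul_right _ CWord.card_le_two_mul_pow
      _ = 512 * N ^ 3 * N ^ (2 * k + lk k) := by
          rw [show 2 * k + lk k = k + lk k + lk k + lk k + Lk k by omega]; ring
  have hNcast : (N : ℝ) = 2 * n - 1 := by rw [hN, Nat.cast_sub (by omega)]; push_cast; ring
  calc _ ≤ ((32 * N ^ 2 * N ^ (2 * k - Lk k) : ℕ) : ℝ) * p ^ 3 +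
        ((512 * N ^ 3 * N ^ (2 * k + lk k) : ℕ) : ℝ) * p ^ 4 := by
        gcongr
    _ = failureBound n k p := by
        rw [failureBound, ← hNcast]; push_cast; ring

theorem cProb_not_doubleEdgesMatch_segments_le (hn : 1 ≤ n) (hp0 : 0 ≤ p) (hp1 : p ≤ 1)
    {a b c : CWord n k → List (Letter n)} {la lb lc : ℕ}
    (ha : ∀ r, IsRedList (a r) ∧ (a r).length = la)
    (hb : ∀ r, IsRedList (b r) ∧ (b r).length = lb)
    (hc : ∀ r, IsRedList (c r) ∧ (c r).length = lc)
    (habc : ∀ r r', a r = a r' → b r = b r' → c r = c r' → r = r')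
    (hlc : lc ≤ lk k + 1) (hac : la + lc ≤ lk k + Lk k + 1) (hbc : lb + lc ≤ lk k + Lk k + 1) :
    cProb n k p {ω | ¬ doubleEdgesMatch (fun r => s(a r, linv (b r))) ω} ≤
      failureBound n k p := by
  have hN : 1 ≤ 2 * n - 1 := by omega
  have hF : ∀ e, (univ.filter fun r => s(a r, linv (b r)) = e).card ≤
      4 * (2 * n - 1) ^ (lk k + 1) :=
    fun e => (card_filter_sym2_eq_le hc habc e).trans
      (Nat.mul_le_mul_left _ (Nat.pow_le_pow_right hN hlc))
  have hG : ∀ w, (univ.filter fun r => w ∈ s(a r, linv (b r))).card ≤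
      8 * (2 * n - 1) ^ (lk k + Lk k + 1) := fun w => by
    have := card_filter_mem_sym2_le ha hb hc habc w
    have := Nat.pow_le_pow_right hN hac
    have := Nat.pow_le_pow_right hN hbc
    omega
  exact (cProb_not_doubleEdgesMatch_le hp0 hp1 hF hG).trans
    (card_mul_pow_add_le_failureBound hn hp0)

theorem cProb_not_doubleEdgesMatch_edge_le (hn : 1 ≤ n) (hp0 : 0 ≤ p) (hp1 : p ≤ 1)
    (i : Fin 3) :
    cProb n k p {ω | ¬ doubleEdgesMatch (![edge1, edge2, edge3] i) ω} ≤ failureBound n k p := by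
  have := two_mul_lk_add_Lk k
  have := Lk_le_lk_add_one k
  have := lk_le_Lk_add_one k
  fin_cases i
  · exact cProb_not_doubleEdgesMatch_segments_le hn hp0 hp1 xPart_spec zPart_spec yPart_spec
      (fun _ _ hx hz hy => ext_parts hx hy hz) (by omega) (by omega) (by omega)
  · exact cProb_not_doubleEdgesMatch_segments_le hn hp0 hp1 yPart_spec xPart_spec zPart_spec
      (fun _ _ hy hx hz => ext_parts hx hy hz) (by omega) (by omega) (by omega)
  · exact cProb_not_doubleEdgesMatch_segments_le hn hp0 hp1 zPart_spec yPart_spec xPart_spec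
      (fun _ _ hz hy hx => ext_parts hx hy hz) (by omega) (by omega) (by omega)

end

/-- Fix `n ≥ 2` and suppose `(2n-1)^{2k-L_k} p³ → 0` and
`(2n-1)^{2k+l_k} p⁴ → 0` as `k → ∞`. Then a.a.s. (as `k → ∞`), in each of the multigraphs
`Σ₁, Σ₂, Σ₃` associated to the binomial random set of relators `R ⊆ C(n,k)`, no two vertices
are joined by three or more edges and the double edges form a matching. -/
theorem double_edges_form_matching (n : ℕ) (hn : 2 ≤ n) (p : ℕ → ℝ)
    (hp : ∀ k, 0 < p k ∧ p k < 1)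
    (h1 : Tendsto (fun k : ℕ => (2 * (n : ℝ) - 1) ^ (2 * k - Lk k) * p k ^ 3) atTop (nhds 0))
    (h2 : Tendsto (fun k : ℕ => (2 * (n : ℝ) - 1) ^ (2 * k + lk k) * p k ^ 4) atTop (nhds 0)) :
    Tendsto (fun k : ℕ => cProb n k (p k)
      {ω | doubleEdgesMatch edge1 ω ∧ doubleEdgesMatch edge2 ω ∧ doubleEdgesMatch edge3 ω})
      atTop (nhds 1) := by
  have hbad : ∀ k, cProb n k (p k) {ω | doubleEdgesMatch edge1 ω ∧ doubleEdgesMatch edge2 ω ∧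
      doubleEdgesMatch edge3 ω}ᶜ ≤ 3 * failureBound n k (p k) := fun k => by
    have hp0 := (hp k).1.le
    have hp1 := (hp k).2.le
    calc _ ≤ cProb n k (p k)
          {ω | ∃ i ∈ univ, ω ∈ {ω | ¬ doubleEdgesMatch (![edge1, edge2, edge3] i) ω}} :=
          cProb_mono hp0 hp1 fun ω hω => by
            rcases not_and_or.mp hω with h | h
            · exact ⟨0, mem_univ _, h⟩
            rcases not_and_or.mp h with h | h
            · exact ⟨1, mem_univ _, h⟩
            · exact ⟨2, mem_univ _, h⟩
      _ ≤ ∑ i : Fin 3, cProb n k (p k) {ω | ¬ doubleEdgesMatch (![edge1, edge2, edge3] i) ω} :=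
          cProb_biUnion_le hp0 hp1 _ _
      _ ≤ ∑ _i : Fin 3, failureBound n k (p k) :=
          sum_le_sum fun i _ => cProb_not_doubleEdgesMatch_edge_le (by omega) hp0 hp1 i
      _ = 3 * failureBound n k (p k) := by simp
  have hlim := squeeze_zero (fun k => cProb_nonneg (hp k).1.le (hp k).2.le _) hbad
    (by simpa using (tendsto_failureBound h1 h2).const_mul 3)
  simpa [← cProb_compl] using hlim.const_sub 1
end
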